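/- Let g be C² on a half-line, with g' eventually monotone and nonvanishing, g nonvanishing, lim_{x→∞} x·g'(x)/g(x) = α ≠ 0, and lim_{x→∞} x·g''(x)/g'(x) = α - 1. Then for every h ≠ 0, lim_{x→∞} (g(x+h) - g(x))/g'(x) = h; in particular g(x+h) - g(x) ∼ h·g'(x) and g(x+h) - g(x) ∼ (h·α)·g(x)/x as x → ∞. -/

import Mathlib

open Filter Set Topology

/-!
The logarithmic derivative `g''/g'` tends to `0`, so `log |g'|` varies by `o(1)` over intervals of
fixed length and `g'(x+h)/g'(x) → 1`. By the mean value theorem `g(x+h) - g(x) = h g'(c)` with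
`c` between `x` and `x+h`, and monotonicity of `g'` traps `g'(c)/g'(x)` between `1` and
`g'(x+h)/g'(x)`. The comparison with `g(x)/x` is then the hypothesis `x g'(x)/g(x) → α`.
-/

theorem ContDiffOn.hasDerivAt_deriv {f : ℝ → ℝ} {s : Set ℝ} (hf : ContDiffOn ℝ 1 f s)
    (hs : IsOpen s) {x : ℝ} (hx : x ∈ s) : HasDerivAt f (deriv f x) x :=
  ((hf.differentiableOn one_ne_zero).differentiableAt (hs.mem_nhds hx)).hasDerivAt

theorem tendsto_of_tendsto_of_tendsto_of_mem_uIcc {ι α : Type*} [LinearOrder α]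
    [TopologicalSpace α] [OrderTopology α] {l : Filter ι} {f g u : ι → α} {a : α}
    (hf : Tendsto f l (𝓝 a)) (hg : Tendsto g l (𝓝 a)) (hu : ∀ᶠ i in l, u i ∈ uIcc (f i) (g i)) :
    Tendsto u l (𝓝 a) := by
  refine tendsto_of_tendsto_of_tendsto_of_le_of_le' ?_ ?_ (hu.mono fun _ hi => hi.1)
    (hu.mono fun _ hi => hi.2)
  · simpa using hf.min hg
  · simpa using hf.max hg

theorem IsPreconnected.div_pos_of_forall_ne_zero {f : ℝ → ℝ} {s : Set ℝ} (hs : IsPreconnected s)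
    (hf : ContinuousOn f s) (hne : ∀ x ∈ s, f x ≠ 0) {a b : ℝ} (ha : a ∈ s) (hb : b ∈ s) :
    0 < f b / f a := by
  have habs : ∀ x ∈ s, 0 < |f x| := fun x hx => abs_pos.2 (hne x hx)
  rcases hs.eq_or_eq_neg_of_sq_eq hf hf.abs (fun x _ => by simp [sq_abs])
      (fun hx => (habs _ hx).ne') with h | h
  · rw [h ha, h hb]
    exact div_pos (habs b hb) (habs a ha)
  · rw [h ha, h hb, Pi.neg_apply, Pi.neg_apply, neg_div_neg_eq]
    exact div_pos (habs b hb) (habs a ha)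

theorem exists_mem_uIcc_sub_eq_mul_of_hasDerivAt {f f' : ℝ → ℝ} {a b : ℝ}
    (hf : ∀ x ∈ uIcc a b, HasDerivAt f (f' x) x) : ∃ c ∈ uIcc a b, f b - f a = (b - a) * f' c := by
  wlog hab : a < b generalizing a b
  · rcases (not_lt.1 hab).eq_or_lt with rfl | hba
    · exact ⟨b, left_mem_uIcc, by ring⟩
    · obtain ⟨c, hc, hfc⟩ := this (uIcc_comm a b ▸ hf) hba
      exact ⟨c, uIcc_comm a b ▸ hc, by linear_combination -hfc⟩
  have hIcc : Icc a b = uIcc a b := (uIcc_of_le hab.le).symm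
  obtain ⟨c, hc, hfc⟩ := exists_hasDerivAt_eq_slope f f' hab
    (fun x hx => (hf x (hIcc ▸ hx)).continuousAt.continuousWithinAt)
    (fun x hx => hf x (hIcc ▸ Ioo_subset_Icc_self hx))
  refine ⟨c, hIcc ▸ Ioo_subset_Icc_self hc, ?_⟩
  rw [hfc, mul_div_cancel₀ _ (sub_ne_zero.2 hab.ne')]

theorem tendsto_sub_comp_add_of_tendsto_deriv {E : Type*} [NormedAddCommGroup E]
    [NormedSpace ℝ E] {f f' : ℝ → E}
    (hf : ∀ᶠ x in atTop, HasDerivAt f (f' x) x) (hf' : Tendsto f' atTop (𝓝 0)) (h : ℝ) :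
    Tendsto (fun x => f (x + h) - f x) atTop (𝓝 0) := by
  rw [Metric.tendsto_nhds]
  intro ε hε
  have hδ : 0 < ε / (|h| + 1) := by positivity
  obtain ⟨N, hN⟩ := eventually_atTop.1
    (hf.and ((tendsto_zero_iff_norm_tendsto_zero.1 hf').eventually (gt_mem_nhds hδ)))
  filter_upwards [eventually_ge_atTop (N + |h|)] with x hx
  have hmem : ∀ y, x - |h| ≤ y → y ∈ Ici N := fun y hy => by
    simp only [mem_Ici]; linarith
  have hbound := (convex_Ici N).norm_image_sub_le_of_norm_hasDerivWithin_le
    (fun t ht => (hN t ht).1.hasDerivWithinAt) (fun t ht => (hN t ht).2.le)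
    (hmem x (by linarith [abs_nonneg h])) (hmem (x + h) (by linarith [neg_abs_le h]))
  rw [dist_zero_right]
  calc ‖f (x + h) - f x‖ ≤ ε / (|h| + 1) * |h| := by simpa using hbound
    _ < ε := by
      rw [div_mul_eq_mul_div, div_lt_iff₀ (by positivity)]
      linarith

theorem tendsto_div_comp_add_of_tendsto_logDeriv {f f' : ℝ → ℝ} {a : ℝ}
    (hf : ∀ x ∈ Ioi a, HasDerivAt f (f' x) x) (hne : ∀ x ∈ Ioi a, f x ≠ 0)
    (hlog : Tendsto (fun x => f' x / f x) atTop (𝓝 0)) (h : ℝ) :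
    Tendsto (fun x => f (x + h) / f x) atTop (𝓝 1) := by
  have hlogf := tendsto_sub_comp_add_of_tendsto_deriv
    (eventually_gt_atTop a |>.mono fun x hx => (hf x hx).log (hne x hx)) hlog h
  have hexp := (Real.continuous_exp.tendsto 0).comp hlogf
  rw [Real.exp_zero] at hexp
  refine hexp.congr' ?_
  filter_upwards [eventually_gt_atTop a, eventually_gt_atTop (a - h)] with x hx hxh
  have hxh' : x + h ∈ Ioi a := by simp only [mem_Ioi]; linarith
  rw [Function.comp_apply, ← Real.log_div (hne _ hxh') (hne x hx),
    Real.exp_log (isPreconnected_Ioi.div_pos_of_forall_ne_zero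
      (fun y hy => (hf y hy).continuousAt.continuousWithinAt) hne hx hxh')]

theorem tendsto_sub_div_mul_deriv {f f' : ℝ → ℝ} {a h : ℝ} (hh : h ≠ 0)
    (hf : ∀ x ∈ Ioi a, HasDerivAt f (f' x) x) (hne : ∀ x ∈ Ioi a, f' x ≠ 0)
    (hmono : MonotoneOn f' (Ioi a) ∨ AntitoneOn f' (Ioi a))
    (hratio : Tendsto (fun x => f' (x + h) / f' x) atTop (𝓝 1)) :
    Tendsto (fun x => (f (x + h) - f x) / (h * f' x)) atTop (𝓝 1) := by
  refine tendsto_of_tendsto_of_tendsto_of_mem_uIcc tendsto_const_nhds hratio ?_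
  filter_upwards [eventually_gt_atTop a, eventually_gt_atTop (a - h)] with x hx hxh
  have hseg : uIcc x (x + h) ⊆ Ioi a :=
    ordConnected_Ioi.uIcc_subset hx (by simp only [mem_Ioi]; linarith)
  obtain ⟨c, hc, hfc⟩ := exists_mem_uIcc_sub_eq_mul_of_hasDerivAt fun y hy => hf y (hseg hy)
  have hc' : f' c ∈ uIcc (f' x) (f' (x + h)) :=
    hmono.elim (fun hm => (hm.mono hseg).mapsTo_uIcc hc) (fun hm => (hm.mono hseg).mapsTo_uIcc hc)
  rw [hfc, add_sub_cancel_left, mul_div_mul_left _ _ hh, ← div_self (hne x hx),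
    ← image_div_const_uIcc]
  exact mem_image_of_mem _ hc'

theorem stmt3_general (g : ℝ → ℝ) (x₀ α : ℝ)
    (hg : ContDiffOn ℝ 2 g (Ici x₀))
    (hne' : ∀ x ∈ Ici x₀, deriv g x ≠ 0)
    (hmono : MonotoneOn (deriv g) (Ici x₀) ∨ AntitoneOn (deriv g) (Ici x₀))
    (hα : Tendsto (fun x => x * deriv g x / g x) atTop (nhds α)) (hα0 : α ≠ 0)
    (hα' : Tendsto (fun x => x * deriv (deriv g) x / deriv g x) atTop (nhds (α - 1))) :
    ∀ h : ℝ, h ≠ 0 →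
      Tendsto (fun x => (g (x + h) - g x) / deriv g x) atTop (nhds h) ∧
      Tendsto (fun x => (g (x + h) - g x) / (h * deriv g x)) atTop (nhds 1) ∧
      Tendsto (fun x => (g (x + h) - g x) / ((h * α) * g x / x)) atTop (nhds 1) := by
  intro h hh
  have hg2 : ContDiffOn ℝ 2 g (Ioi x₀) := hg.mono Ioi_subset_Ici_self
  have hg' : ∀ x ∈ Ioi x₀, HasDerivAt g (deriv g x) x := fun x =>
    (hg2.of_le one_le_two).hasDerivAt_deriv isOpen_Ioi
  have hg'' : ∀ x ∈ Ioi x₀, HasDerivAt (deriv g) (deriv (deriv g) x) x := fun x =>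
    (hg2.deriv_of_isOpen isOpen_Ioi (by norm_num)).hasDerivAt_deriv isOpen_Ioi
  have hg'_ne : ∀ x ∈ Ioi x₀, deriv g x ≠ 0 := fun x hx => hne' x (Ioi_subset_Ici_self hx)
  have hlogDeriv : Tendsto (fun x => deriv (deriv g) x / deriv g x) atTop (𝓝 0) := by
    have hdiv := hα'.mul tendsto_inv_atTop_zero
    rw [mul_zero] at hdiv
    refine hdiv.congr' ?_
    filter_upwards [eventually_gt_atTop 0] with x hx
    field_simp
  have hT := tendsto_sub_div_mul_deriv hh hg' hg'_ne
    (hmono.imp (·.mono Ioi_subset_Ici_self) (·.mono Ioi_subset_Ici_self))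
    (tendsto_div_comp_add_of_tendsto_logDeriv hg'' hg'_ne hlogDeriv h)
  refine ⟨?_, hT, ?_⟩
  · have hscaled := hT.const_mul h
    rw [mul_one] at hscaled
    refine hscaled.congr fun x => ?_
    rw [mul_div_assoc', mul_div_mul_left _ _ hh]
  · have hgx : ∀ᶠ x in atTop, g x ≠ 0 :=
      (hα.eventually_ne hα0).mono fun x hx hgx => hx (by rw [hgx, div_zero])
    have hprod := (hT.mul hα).div_const α
    rw [one_mul, div_self hα0] at hprod
    refine hprod.congr' ?_
    filter_upwards [eventually_gt_atTop x₀, eventually_gt_atTop 0, hgx] with x hx hx0 hgx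
    have hg'x := hg'_ne x hx
    field_simp

/-- If `g` is C² on `[x₀, ∞)`, `g` and `g'` nonvanishing there, `g'` monotone on the
half-line, `x g'(x)/g(x) → α ≠ 0` and `x g''(x)/g'(x) → α - 1`, then for every `h ≠ 0`,
`(g(x+h) - g x)/g'(x) → h`; in particular `g(x+h) - g x ∼ h·g'(x)` and
`g(x+h) - g x ∼ (h·α)·g x / x`. -/
theorem stmt3 (g : ℝ → ℝ) (x₀ α : ℝ)
    (hg : ContDiffOn ℝ 2 g (Ici x₀))
    (hne : ∀ x ∈ Ici x₀, g x ≠ 0)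
    (hne' : ∀ x ∈ Ici x₀, deriv g x ≠ 0)
    (hmono : MonotoneOn (deriv g) (Ici x₀) ∨ AntitoneOn (deriv g) (Ici x₀))
    (hα : Tendsto (fun x => x * deriv g x / g x) atTop (nhds α)) (hα0 : α ≠ 0)
    (hα' : Tendsto (fun x => x * deriv (deriv g) x / deriv g x) atTop (nhds (α - 1))) :
    ∀ h : ℝ, h ≠ 0 →
      Tendsto (fun x => (g (x + h) - g x) / deriv g x) atTop (nhds h) ∧
      Tendsto (fun x => (g (x + h) - g x) / (h * deriv g x)) atTop (nhds 1) ∧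
      Tendsto (fun x => (g (x + h) - g x) / ((h * α) * g x / x)) atTop (nhds 1) :=
  stmt3_general g x₀ α hg hne' hmono hα hα0 hα'
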